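/- arXiv:1610.07397 — 3 statements merged into one kernel-verified Lean document; each statement's English description precedes it below -/
import Mathlib

section
/- Let G be a finite group, W an abelian normal subgroup of G with quotient H = G/W, and suppose there is a normal subgroup K of H such that gcd(|K|, |W|) = 1 and such that no non-identity element of W is fixed by the conjugation action of K on W. Then the extension splits: G is isomorphic to the semidirect product W ⋊ H. -/
/-!
Let `L` be the preimage of `K` in `G`. By Schur–Zassenhaus `W` has a complement `C` in `L`, and,
`W` being abelian, any two complements of `W` in `L` are conjugate by an element of `W`. Since
`W` and `L` are normal in `G`, every `G`-conjugate of `C` is again such a complement, so the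
Frattini argument gives `G = W · N_G(C)`. An element of `W ∩ N_G(C)` has its commutators with `C`
in `W ∩ C = 1`, so it centralizes `C`, and `W` as well, hence `L = W C`; it is then fixed by `K`.
So `W ∩ N_G(C) = 1` and `N_G(C)` is a complement of `W` in `G`.
-/

open MulAction Pointwise

namespace Subgroup

section SchurZassenhausAbelian

variable {G : Type*} [Group G] [Finite G] {N C C' : Subgroup G} [N.Normal] [IsMulCommutative N]

def IsComplement'.quotientDiffMk (h : IsComplement' N C) : N.QuotientDiff :=
  Quotient.mk'' ⟨C, h.symm⟩

theorem IsComplement'.stabilizer_quotientDiffMk (hcop : (Nat.card N).Coprime N.index)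
    (h : IsComplement' N C) :
    stabilizer G h.quotientDiffMk = C := by
  refine (eq_of_le_of_card_ge (fun c hc => ?_) ?_).symm
  · refine congrArg Quotient.mk'' (Subtype.ext ?_)
    show MulOpposite.op c⁻¹ • (C : Set G) = C
    ext y
    constructor
    · rintro ⟨z, hz, rfl⟩
      simpa using C.mul_mem hz (C.inv_mem hc)
    · exact fun hy => ⟨y * c, C.mul_mem hy hc, by simp⟩
  · rw [(isComplement'_stabilizer_of_coprime hcop).symm.index_eq_card.symm, h.symm.index_eq_card]

theorem IsComplement'.exists_map_conj_eq (hcop : (Nat.card N).Coprime N.index)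
    (h : IsComplement' N C) (h' : IsComplement' N C') :
    ∃ n ∈ N, C.map (MulAut.conj n) = C' := by
  obtain ⟨n, hn⟩ := exists_smul_eq hcop h.quotientDiffMk h'.quotientDiffMk
  refine ⟨n, n.2, ?_⟩
  rw [← h.stabilizer_quotientDiffMk hcop, ← h'.stabilizer_quotientDiffMk hcop, ← hn]
  exact (stabilizer_smul_eq_stabilizer_map_conj (n : G) _).symm

end SchurZassenhausAbelian

variable {G : Type*} [Group G]

theorem mem_centralizer_of_mem_normalizer_of_disjoint {W C : Subgroup G} [W.Normal]
    (hWC : Disjoint W C) {x : G} (hxW : x ∈ W) (hxC : x ∈ normalizer (C : Set G)) :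
    x ∈ centralizer C := by
  intro c hc
  have hcomm : x * c * x⁻¹ * c⁻¹ = 1 := by
    refine disjoint_def.mp hWC ?_ ?_
    · simpa only [mul_assoc] using W.mul_mem hxW (‹W.Normal›.conj_mem _ (W.inv_mem hxW) c)
    · exact C.mul_mem ((mem_normalizer_iff.mp hxC c).mp hc) (C.inv_mem hc)
  rw [mul_inv_eq_one, mul_inv_eq_iff_eq_mul] at hcomm
  exact hcomm.symm

variable [Finite G] {W L : Subgroup G} [W.Normal] [L.Normal] [IsMulCommutative W]

theorem exists_mul_mem_normalizer_of_isComplement'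
    (hcop : (Nat.card (W.subgroupOf L)).Coprime (W.relIndex L))
    {C : Subgroup L} (hC : IsComplement' (W.subgroupOf L) C) (g : G) :
    ∃ w ∈ W, w * g ∈ normalizer (C.map L.subtype : Set G) := by
  set D := C.map ((MulAut.conjNormal g : L ≃* L) : L →* L)
  have hD : IsComplement' (W.subgroupOf L) D := by
    have hcard : Nat.card D = Nat.card C := card_map_of_injective (MulAut.conjNormal g).injective
    refine isComplement'_of_coprime ?_ ?_ <;> rw [hcard]
    · exact hC.card_mul_card
    · rwa [← hC.symm.index_eq_card]
  obtain ⟨w, hwW, hw⟩ := hD.exists_map_conj_eq hcop hC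
  refine ⟨w, mem_subgroupOf.mp hwW, mem_normalizer_iff_map_conj_eq.mpr ?_⟩
  have hcomp : (MulAut.conj ((w : G) * g) : G →* G).comp L.subtype = L.subtype.comp
      ((MulAut.conj w : L →* L).comp ((MulAut.conjNormal g : L ≃* L) : L →* L)) := by
    ext x
    simp [mul_assoc]
  rw [map_map, hcomp, ← map_map, ← map_map, hw]

theorem exists_isComplement'_of_coprime_of_inf_centralizer_eq_bot (hWL : W ≤ L)
    (hcop : (Nat.card W).Coprime (W.relIndex L)) (hcen : W ⊓ centralizer L = ⊥) :
    ∃ N : Subgroup G, IsComplement' W N := by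
  have hcop₀ : (Nat.card (W.subgroupOf L)).Coprime (W.subgroupOf L).index := by
    rwa [Nat.card_congr (subgroupOfEquivOfLe hWL).toEquiv]
  obtain ⟨C, hC⟩ := exists_right_complement'_of_coprime hcop₀
  have hsup : W ⊔ C.map L.subtype = L := by
    rw [← map_subgroupOf_eq_of_le hWL, ← map_sup, hC.sup_eq_top, ← MonoidHom.range_eq_map,
      range_subtype]
  have hWC : Disjoint W (C.map L.subtype) := by
    simpa only [map_subgroupOf_eq_of_le hWL] using disjoint_map L.subtype_injective hC.disjoint
  refine ⟨normalizer (C.map L.subtype : Set G), isComplement'_of_disjoint_and_mul_eq_univ ?_ ?_⟩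
  · refine disjoint_def.mpr fun {x} hxW hxN => ?_
    have hxL : x ∈ centralizer (L : Set G) := by
      rw [← zpowers_le, le_centralizer_iff, ← hsup]
      refine sup_le ?_ ?_ <;> rw [le_centralizer_iff, zpowers_le]
      · exact le_centralizer W hxW
      · exact mem_centralizer_of_mem_normalizer_of_disjoint hWC hxW hxN
    exact mem_bot.mp (hcen ▸ mem_inf.mpr ⟨hxW, hxL⟩)
  · refine Set.eq_univ_of_forall fun g => ?_
    obtain ⟨w, hw, hwg⟩ := exists_mul_mem_normalizer_of_isComplement' hcop₀ hC g
    exact ⟨w⁻¹, W.inv_mem hw, w * g, hwg, inv_mul_cancel_left w g⟩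

end Subgroup

open Subgroup

/-- let `G` be a finite group, `W` an abelian normal subgroup with quotient
`H = G/W`, and `K ⊴ H` with `gcd(|K|, |W|) = 1` such that no non-identity element of `W`
is fixed by the conjugation action of `K`. Then the extension splits, i.e. `G ≅ W ⋊ H`:
there is a homomorphism `s : H → G` which is a section of the natural projection. -/
theorem stmt3 (G : Type) [Group G] [Finite G] (W : Subgroup G) [W.Normal]
    (hWab : ∀ x y : W, x * y = y * x)
    (K : Subgroup (G ⧸ W)) [K.Normal]
    (hcop : Nat.Coprime (Nat.card K) (Nat.card W))
    (hfix : ∀ w : G, w ∈ W → (∀ g : G, (g : G ⧸ W) ∈ K → g * w * g⁻¹ = w) → w = 1) :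
    ∃ s : (G ⧸ W) →* G, ∀ x : G ⧸ W, (s x : G ⧸ W) = x := by
  have : IsMulCommutative W := ⟨⟨hWab⟩⟩
  set L := K.comap (QuotientGroup.mk' W)
  have hWL : W ≤ L := fun w hw => by simp [L, (QuotientGroup.eq_one_iff w).mpr hw]
  have hindex : W.relIndex L = Nat.card K := by
    rw [congrArg (relIndex · L) (QuotientGroup.ker_mk' W).symm, ← MonoidHom.comap_bot,
      relIndex_comap, map_comap_eq_self_of_surjective (QuotientGroup.mk'_surjective W),
      relIndex_bot_left]
  have hcen : W ⊓ centralizer L = ⊥ := by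
    refine eq_bot_iff.mpr fun w ⟨hwW, hwL⟩ => mem_bot.mpr (hfix w hwW fun g hg => ?_)
    rw [hwL g hg, mul_inv_cancel_right]
  obtain ⟨N, hN⟩ :=
    exists_isComplement'_of_coprime_of_inf_centralizer_eq_bot hWL (hindex ▸ hcop.symm) hcen
  exact ⟨N.subtype.comp hN.symm.QuotientMulEquiv.toMonoidHom,
    hN.symm.quotientGroupMk_leftQuotientEquiv⟩
end

section
/- Let G be a finite group, W an abelian normal subgroup of G with quotient H, and K a normal subgroup of H such that gcd(|K|, |W|) = 1 and W^K = 1 (no non-identity element of W is fixed by K). Then the second group cohomology H^2(H, W) with coefficients in the H-module W vanishes. -/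
/-!
For a 2-cocycle `f`, sum the cocycle identity over `κ ∈ K` placed in each of its three slots.
Terms `ρ κ (⋯)` drop out because the `K`-norm `∑ κ, ρ κ` lands in `W^K = 0`, and normality of
`K` lets `κ` move past any element; what remains is `|K| • f = d (R - P)` with
`R x = ∑ κ, f (x, κ)` and `P x = ∑ κ, f (κ, x)`. As `|K|` is prime to `|W|`, multiplication by
`|K|` is invertible on `W`, so `f` itself is a coboundary.
-/

open scoped IsMulCommutative

open groupCohomology

theorem Subgroup.sum_mul_eq_sum_mul_comm_of_normal {G M : Type*} [Group G] [AddCommMonoid M]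
    {K : Subgroup G} [K.Normal] [Fintype K] (φ : G → M) (x : G) :
    ∑ κ : K, φ (x * κ) = ∑ κ : K, φ (κ * x) :=
  Fintype.sum_equiv (MulAut.conjNormal x).toEquiv _ _ fun κ => by
    simp [MulAut.conjNormal_apply]

theorem Representation.sum_subgroup_apply_eq_zero {k G V : Type*} [Semiring k] [Group G]
    [AddCommMonoid V] [Module k V] (ρ : Representation k G V) (K : Subgroup G) [Fintype K]
    (hK : ∀ v, (∀ κ : K, ρ κ v = v) → v = 0) (v : V) : ∑ κ : K, ρ κ v = 0 :=
  hK _ fun κ => by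
    simpa [Representation.norm] using Representation.self_norm_apply (ρ.comp K.subtype) κ v

namespace groupCohomology

universe u

variable {k G : Type u} [CommRing k] [Group G] {A : Rep k G} {K : Subgroup G} [Fintype K]
  {f : G × G → A}

theorem sum_cocycle₂_mul_left (hN : ∀ a : A, ∑ κ : K, A.ρ κ a = 0) (hf : f ∈ cocycles₂ A)
    (y z : G) : ∑ κ : K, f (κ * y, z) = ∑ κ : K, f (κ, y * z) - ∑ κ : K, f (κ, y) := by
  have h (κ : K) : f (κ * y, z) = A.ρ κ (f (y, z)) + f (κ, y * z) - f (κ, y) :=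
    eq_sub_of_add_eq ((mem_cocycles₂_iff f).1 hf κ y z)
  rw [Finset.sum_congr rfl fun κ _ => h κ, Finset.sum_sub_distrib, Finset.sum_add_distrib, hN,
    zero_add]

theorem sum_cocycle₂_mul_right [K.Normal] (hN : ∀ a : A, ∑ κ : K, A.ρ κ a = 0)
    (hf : f ∈ cocycles₂ A) (x y : G) :
    ∑ κ : K, f (x, y * κ) = ∑ κ : K, f (κ, x * y) - ∑ κ : K, f (κ, x) + ∑ κ : K, f (x, κ)
      - A.ρ x (∑ κ : K, f (κ, y)) := by
  have h (κ : K) : f (x, κ * y) = f (x * κ, y) + f (x, κ) - A.ρ x (f (κ, y)) :=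
    eq_sub_of_add_eq' ((mem_cocycles₂_iff f).1 hf x κ y).symm
  rw [Subgroup.sum_mul_eq_sum_mul_comm_of_normal (fun g => f (x, g)),
    Finset.sum_congr rfl fun κ _ => h κ, Finset.sum_sub_distrib, Finset.sum_add_distrib,
    Subgroup.sum_mul_eq_sum_mul_comm_of_normal (fun g => f (g, y)),
    sum_cocycle₂_mul_left hN hf, map_sum]

theorem card_smul_cocycle₂_eq_d₁₂ [K.Normal] (hN : ∀ a : A, ∑ κ : K, A.ρ κ a = 0)
    (hf : f ∈ cocycles₂ A) :
    Fintype.card K • f = (d₁₂ A).hom fun x => ∑ κ : K, f (x, κ) - ∑ κ : K, f (κ, x) := by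
  ext ⟨x, y⟩
  have h (κ : K) : f (x, y) = A.ρ x (f (y, κ)) + f (x, y * κ) - f (x * y, κ) :=
    eq_sub_of_add_eq' ((mem_cocycles₂_iff f).1 hf x y κ)
  rw [Pi.smul_apply, ← Finset.card_univ, ← Finset.sum_const, Finset.sum_congr rfl fun κ _ => h κ,
    Finset.sum_sub_distrib, Finset.sum_add_distrib, sum_cocycle₂_mul_right hN hf, ← map_sum,
    d₁₂_hom_apply, map_sub]
  abel

theorem subsingleton_H2_of_sum_subgroup_eq_zero [K.Normal] (hN : ∀ a : A, ∑ κ : K, A.ρ κ a = 0)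
    (hK : Function.Bijective fun a : A => Fintype.card K • a) : Subsingleton (H2 A) := by
  refine subsingleton_of_forall_eq 0 fun x => ?_
  induction x using H2_induction_on with | h f => ?_
  rw [H2π_eq_zero_iff]
  set u : G → A := fun x => ∑ κ : K, f (x, κ) - ∑ κ : K, f (κ, x)
  choose div hdiv using hK.2
  have hu : Fintype.card K • (div ∘ u) = u := funext fun x => hdiv (u x)
  refine ⟨div ∘ u, funext fun p => hK.1 ?_⟩
  change Fintype.card K • (d₁₂ A).hom (div ∘ u) p = Fintype.card K • (f : G × G → A) p
  rw [← Pi.smul_apply, ← map_nsmul, hu]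
  exact congrFun (card_smul_cocycle₂_eq_d₁₂ hN f.2).symm p

end groupCohomology

/-- let `G` be a finite group, `W` an abelian normal subgroup with quotient
`H = G/W`, on which `H` acts by conjugation (encoded by a representation `ρ` of `H` on the
abelian group `W`, written additively, which agrees with conjugation), and `K ⊴ H` with
`gcd(|K|, |W|) = 1` such that no non-identity element of `W` is fixed by `K`. Then the
second group cohomology `H²(H, W)` vanishes. -/
theorem stmt4 (G : Type) [Group G] [Finite G] (W : Subgroup G) [hN : W.Normal]
    [IsMulCommutative W]
    (K : Subgroup (G ⧸ W)) [K.Normal]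
    (hcop : Nat.Coprime (Nat.card K) (Nat.card W))
    (hfix : ∀ w : G, w ∈ W → (∀ g : G, (g : G ⧸ W) ∈ K → g * w * g⁻¹ = w) → w = 1)
    (ρ : Representation ℤ (G ⧸ W) (Additive W))
    (hρ : ∀ (g : G) (w : W),
      ρ ((g : G) : G ⧸ W) (Additive.ofMul w) =
        Additive.ofMul (⟨g * (w : G) * g⁻¹, hN.conj_mem (w : G) w.2 g⟩ : W)) :
    Subsingleton (groupCohomology (Rep.of ρ) 2) := by
  have := Fintype.ofFinite K
  have hK : ∀ a : Additive W, (∀ κ : K, ρ κ a = a) → a = 0 := by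
    intro a ha
    suffices (a.toMul : G) = 1 from congrArg Additive.ofMul (Subtype.ext this)
    refine hfix _ a.toMul.2 fun g hg => ?_
    have h := hρ g a.toMul
    rw [ofMul_toMul, ha ⟨g, hg⟩] at h
    exact congrArg (fun w : Additive W => (w.toMul : G)) h.symm
  refine subsingleton_H2_of_sum_subgroup_eq_zero (A := Rep.of ρ) (K := K)
    (ρ.sum_subgroup_apply_eq_zero K hK) ?_
  rw [← Nat.card_eq_fintype_card]
  exact Nat.Coprime.nsmul_right_bijective hcop.symm
end

section
/- Let p be a prime and P a finite p-group. The kernel of the map b(P) → G_0(F_p[P]), [X] ↦ [F_p[X]], is precisely the set of elements Σ n_i [X_i] (virtual G-sets) whose total 'virtual cardinality' Σ n_i |X_i| is zero; i.e. the kernel equals the kernel of the augmentation b(P) → Z sending [X] to |X|. -/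
/-- Relations for the Grothendieck group `G₀(R)`: see `G0`. -/
def G0Rels (R : Type) [Ring R] : AddSubgroup (FreeAbelianGroup (ModuleCat.{0} R)) :=
  AddSubgroup.closure
    { x | ∃ (A C B : ModuleCat.{0} R), Module.Finite R A ∧ Module.Finite R C ∧
        Module.Finite R B ∧
        ∃ (f : A →ₗ[R] C) (g : C →ₗ[R] B),
          Function.Injective f ∧ Function.Surjective g ∧
          LinearMap.range f = LinearMap.ker g ∧
          x = FreeAbelianGroup.of A - FreeAbelianGroup.of C + FreeAbelianGroup.of B }

/-- The Grothendieck group `G₀(R)` of finitely generated `R`-modules. -/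
def G0 (R : Type) [Ring R] : Type 1 :=
  FreeAbelianGroup (ModuleCat.{0} R) ⧸ G0Rels R

instance (R : Type) [Ring R] : AddCommGroup (G0 R) :=
  QuotientAddGroup.Quotient.addCommGroup _

/-- The class of a module in the Grothendieck group. -/
def G0.cls {R : Type} [Ring R] (M : ModuleCat.{0} R) : G0 R :=
  QuotientAddGroup.mk (FreeAbelianGroup.of M)

/-- A bundled finite `G`-set. -/
structure BSet (G : Type) [Group G] : Type 1 where
  carrier : Type
  [ft : Finite carrier]
  [ma : MulAction G carrier]

attribute [instance] BSet.ft BSet.ma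

/-- The relations defining the Burnside ring `b(G)` as a quotient of the free abelian
group on (bundled) finite `G`-sets: `[X] + [Y] - [X ⊔ Y]`, together with `[X] - [Y]`
whenever `X ≅ Y` as `G`-sets (so that `b(G)` is the free abelian group on isomorphism
classes of finite `G`-sets modulo the disjoint union relations). -/
def burnsideRels (G : Type) [Group G] : AddSubgroup (FreeAbelianGroup (BSet G)) :=
  AddSubgroup.closure
    ({ x | ∃ A B : BSet G,
        x = FreeAbelianGroup.of A + FreeAbelianGroup.of B -
          FreeAbelianGroup.of ⟨A.carrier ⊕ B.carrier⟩ } ∪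
     { x | ∃ A B : BSet G, (∃ e : A.carrier ≃ B.carrier, ∀ (g : G) a, e (g • a) = g • e a) ∧
        x = FreeAbelianGroup.of A - FreeAbelianGroup.of B })

/-- The map on the free abelian group on finite `G`-sets sending a `G`-set `X` to the
class of the permutation module `𝔽_p[X]` in `G₀(𝔽_p[G])`.  It descends to the map
`m_{𝔽_p,ss}(G) : b(G) → G₀(𝔽_p[G])` since it kills `burnsideRels G`. -/
noncomputable def permClass (p : ℕ) [Fact p.Prime] (G : Type) [Group G] :
    FreeAbelianGroup (BSet G) →+ G0 (MonoidAlgebra (ZMod p) G) :=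
  FreeAbelianGroup.lift fun A =>
    G0.cls (ModuleCat.of (MonoidAlgebra (ZMod p) G)
      (Representation.ofMulAction (ZMod p) G A.carrier).asModule)

/-- The augmentation map `b(G) → ℤ` sending a finite `G`-set to its cardinality,
considered on the free abelian group on finite `G`-sets. -/
noncomputable def aug (G : Type) [Group G] : FreeAbelianGroup (BSet G) →+ ℤ :=
  FreeAbelianGroup.lift fun A => (Nat.card A.carrier : ℤ)

/-! The `p`-adic valuation of the cardinality is additive on short exact sequences of finite
modules, so it induces a homomorphism `G₀(𝔽_p[P]) → ℤ`; it sends `[𝔽_p[X]]` to `|X|`, so the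
kernel of `b(P) → G₀(𝔽_p[P])` lies in that of the augmentation. Conversely, a nonzero finite
`𝔽_p[P]`-module has a nonzero `P`-invariant vector (orbits of a `p`-group on a set of size
divisible by `p`), which spans a copy of the trivial module `𝔽_p[P] ⧸ I`, `I` the augmentation
ideal. Induction on the cardinality gives `[M] = v_p(|M|) • [𝔽_p[P] ⧸ I]` for every finite `M`,
hence `[𝔽_p[X]] = |X| • [𝔽_p[P] ⧸ I]`. -/

theorem Nat.card_eq_card_mul_card_of_exact {R A C B : Type} [Ring R] [AddCommGroup A] [Module R A]
    [AddCommGroup C] [Module R C] [AddCommGroup B] [Module R B]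
    (f : A →ₗ[R] C) (g : C →ₗ[R] B) (hf : Function.Injective f) (hg : Function.Surjective g)
    (hfg : LinearMap.range f = LinearMap.ker g) : Nat.card C = Nat.card A * Nat.card B := by
  rw [(LinearMap.ker g).card_eq_card_quotient_mul_card, ← hfg,
    ← Nat.card_congr (LinearEquiv.ofInjective f hf).toEquiv,
    Nat.card_congr
      (Submodule.quotEquivOfEq _ _ hfg ≪≫ₗ g.quotKerEquivOfSurjective hg).toEquiv]

namespace G0

section

variable {R : Type} [Ring R]

theorem cls_sub_cls_add_cls_eq_zero {A C B : Type} [AddCommGroup A] [Module R A]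
    [AddCommGroup C] [Module R C] [AddCommGroup B] [Module R B]
    [Module.Finite R A] [Module.Finite R C] [Module.Finite R B]
    (f : A →ₗ[R] C) (g : C →ₗ[R] B) (hf : Function.Injective f) (hg : Function.Surjective g)
    (hfg : LinearMap.range f = LinearMap.ker g) :
    cls (.of R A) - cls (.of R C) + cls (.of R B) = 0 :=
  (QuotientAddGroup.eq_zero_iff _).2 <| AddSubgroup.subset_closure
    ⟨.of R A, .of R C, .of R B, ‹_›, ‹_›, ‹_›, f, g, hf, hg, hfg, rfl⟩

theorem cls_eq_zero_of_subsingleton (M : Type) [AddCommGroup M] [Module R M] [Subsingleton M] :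
    cls (.of R M) = 0 := by
  have := Module.Finite.of_finite (R := R) (M := M)
  simpa using cls_sub_cls_add_cls_eq_zero (R := R) LinearMap.id (0 : M →ₗ[R] M)
    Function.injective_id (fun _ ↦ ⟨0, Subsingleton.elim _ _⟩) (Subsingleton.elim _ _)

theorem cls_congr {M N : Type} [AddCommGroup M] [Module R M] [AddCommGroup N] [Module R N]
    [Module.Finite R M] (e : M ≃ₗ[R] N) : cls (.of R M) = cls (.of R N) := by
  have := Module.Finite.equiv e
  have := cls_sub_cls_add_cls_eq_zero (R := R) e.toLinearMap (0 : N →ₗ[R] PUnit) e.injective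
    (fun _ ↦ ⟨0, Subsingleton.elim _ _⟩) (by rw [LinearMap.ker_zero, LinearEquiv.range])
  rwa [cls_eq_zero_of_subsingleton PUnit, add_zero, sub_eq_zero] at this

theorem cls_eq_cls_add_cls_quotient (M : Type) [AddCommGroup M] [Module R M] [Finite M]
    (N : Submodule R M) : cls (.of R M) = cls (.of R N) + cls (.of R (M ⧸ N)) := by
  have := cls_sub_cls_add_cls_eq_zero N.subtype N.mkQ N.injective_subtype N.mkQ_surjective
    (by rw [Submodule.range_subtype, Submodule.ker_mkQ])
  rw [eq_comm, ← sub_eq_zero, ← this]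
  abel

end

variable (p : ℕ) [Fact p.Prime] (R : Type) [Ring R] [Finite R]

noncomputable def padicValCard : G0 R →+ ℤ :=
  QuotientAddGroup.lift (G0Rels R)
    (FreeAbelianGroup.lift fun M ↦ (padicValNat p (Nat.card M) : ℤ)) <| by
    rw [G0Rels, AddSubgroup.closure_le]
    rintro _ ⟨A, C, B, hA, -, hB, f, g, hf, hg, hfg, rfl⟩
    have := Module.finite_of_finite R (M := A)
    have := Module.finite_of_finite R (M := B)
    simp only [SetLike.mem_coe, AddMonoidHom.mem_ker, map_add, map_sub,
      FreeAbelianGroup.lift_apply_of]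
    rw [Nat.card_eq_card_mul_card_of_exact f g hf hg hfg,
      padicValNat.mul Nat.card_pos.ne' Nat.card_pos.ne']
    push_cast
    ring

variable {R}

theorem padicValCard_cls (M : Type) [AddCommGroup M] [Module R M] :
    padicValCard p R (cls (.of R M)) = padicValNat p (Nat.card M) :=
  FreeAbelianGroup.lift_apply_of ..

end G0

instance MonoidAlgebra.finite (k G : Type*) [Semiring k] [Finite k] [Finite G] :
    Finite (MonoidAlgebra k G) :=
  Finite.of_equiv _ (MonoidAlgebra.coeffEquiv.trans Finsupp.equivFunOnFinite).symm

instance Representation.finite_asModule {k G V : Type*} [Semiring k] [Monoid G]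
    [AddCommMonoid V] [Module k V] [Finite V] (ρ : Representation k G V) : Finite ρ.asModule :=
  inferInstanceAs (Finite V)

theorem Representation.card_ofMulAction_asModule (k G X : Type*) [Semiring k] [Monoid G]
    [MulAction G X] [Finite X] :
    Nat.card (ofMulAction k G X).asModule = Nat.card k ^ Nat.card X := by
  rw [Nat.card_congr ((ofMulAction k G X).asModuleEquiv.toEquiv.trans
    (MonoidAlgebra.coeffEquiv.trans Finsupp.equivFunOnFinite)), Nat.card_fun]

theorem padicValNat_card_ofMulAction_asModule (p : ℕ) [Fact p.Prime] (G X : Type) [Monoid G]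
    [MulAction G X] [Finite X] :
    padicValNat p (Nat.card (Representation.ofMulAction (ZMod p) G X).asModule) = Nat.card X := by
  rw [Representation.card_ofMulAction_asModule, Nat.card_zmod, padicValNat.prime_pow]

theorem padicValCard_permClass (p : ℕ) [Fact p.Prime] (G : Type) [Group G] [Finite G]
    (x : FreeAbelianGroup (BSet G)) :
    G0.padicValCard p _ (permClass p G x) = aug G x := by
  rw [← AddMonoidHom.comp_apply]
  congr 1
  refine FreeAbelianGroup.lift_ext _ _ fun X ↦ ?_
  rw [AddMonoidHom.comp_apply, permClass, aug, FreeAbelianGroup.lift_apply_of,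
    FreeAbelianGroup.lift_apply_of, G0.padicValCard_cls, padicValNat_card_ofMulAction_asModule]

namespace MonoidAlgebra

variable (k G : Type*) [Field k] [Monoid G]

noncomputable def augmentationIdeal : Ideal (MonoidAlgebra k G) :=
  RingHom.ker (lift k k G 1)

theorem card_quotient_augmentationIdeal :
    Nat.card (MonoidAlgebra k G ⧸ augmentationIdeal k G) = Nat.card k := by
  have hker : (augmentationIdeal k G).restrictScalars k =
      LinearMap.ker (lift k k G 1).toLinearMap := by
    ext
    simp [augmentationIdeal]
  have hsurj : Function.Surjective (lift k k G 1) := fun c ↦ ⟨algebraMap k _ c, by simp⟩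
  exact Nat.card_congr ((Submodule.Quotient.restrictScalarsEquiv k _).symm ≪≫ₗ
    Submodule.quotEquivOfEq _ _ hker ≪≫ₗ
    (lift k k G 1).toLinearMap.quotKerEquivOfSurjective hsurj).toEquiv

variable {k G} {M : Type*} [AddCommGroup M] [Module (MonoidAlgebra k G) M]

theorem smul_eq_algebraMap_lift_smul {b : M} (hb : ∀ g, of k G g • b = b)
    (r : MonoidAlgebra k G) :
    r • b = algebraMap k (MonoidAlgebra k G) (lift k k G 1 r) • b := by
  induction r using MonoidAlgebra.induction_on with
  | of g => rw [hb g, lift_of, MonoidHom.one_apply, map_one, one_smul]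
  | add f g hf hg => rw [add_smul, hf, hg, map_add, map_add, add_smul]
  | smul c f hf =>
    rw [Algebra.smul_def, mul_smul, hf, ← mul_smul, ← map_mul, map_mul (lift k k G 1),
      AlgHom.commutes, Algebra.algebraMap_self_apply]

theorem ker_toSpanSingleton_eq_augmentationIdeal {b : M} (hb : ∀ g, of k G g • b = b)
    (hb0 : b ≠ 0) : LinearMap.ker (LinearMap.toSpanSingleton _ M b) = augmentationIdeal k G := by
  ext r
  rw [LinearMap.mem_ker, LinearMap.toSpanSingleton_apply, smul_eq_algebraMap_lift_smul hb,
    augmentationIdeal, RingHom.mem_ker]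
  constructor
  · intro h
    by_contra hr
    apply hb0
    rw [← one_smul (MonoidAlgebra k G) b, ← map_one (algebraMap k _), ← inv_mul_cancel₀ hr,
      map_mul, mul_smul, h, smul_zero]
  · intro h
    rw [h, map_zero, zero_smul]

end MonoidAlgebra

section PGroup

open MonoidAlgebra

variable {p : ℕ} [Fact p.Prime] {P : Type} [Group P]

theorem IsPGroup.exists_invariant_ne_zero (hP : IsPGroup p P)
    (M : Type) [AddCommGroup M] [Module (ZMod p)[P] M] [Finite M] [Nontrivial M] :
    ∃ b : M, b ≠ 0 ∧ ∀ g, of (ZMod p) P g • b = b := by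
  let := MulAction.compHom M (of (ZMod p) P)
  have hp (x : M) : p • x = 0 := by
    rw [← Nat.cast_smul_eq_nsmul (ZMod p)[P], ← map_natCast (algebraMap (ZMod p) _),
      ZMod.natCast_self, map_zero, zero_smul]
  obtain ⟨x, hx⟩ := exists_ne (0 : M)
  have hdvd : p ∣ Nat.card M := addOrderOf_eq_prime (hp x) hx ▸ addOrderOf_dvd_natCard x
  obtain ⟨b, hb, hb0⟩ := hP.exists_fixed_point_of_prime_dvd_card_of_fixed_point M hdvd
    (a := 0) fun g ↦ smul_zero (of (ZMod p) P g)
  exact ⟨b, hb0.symm, hb⟩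

theorem IsPGroup.exists_submodule_equiv_quotient_augmentationIdeal (hP : IsPGroup p P)
    (M : Type) [AddCommGroup M] [Module (ZMod p)[P] M] [Finite M] [Nontrivial M] :
    ∃ N : Submodule (ZMod p)[P] M,
      Nonempty (((ZMod p)[P] ⧸ augmentationIdeal (ZMod p) P) ≃ₗ[(ZMod p)[P]] N) := by
  obtain ⟨b, hb0, hb⟩ := hP.exists_invariant_ne_zero M
  exact ⟨_, ⟨Submodule.quotEquivOfEq _ _ (ker_toSpanSingleton_eq_augmentationIdeal hb hb0).symm
    ≪≫ₗ (LinearMap.toSpanSingleton (ZMod p)[P] M b).quotKerEquivRange⟩⟩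

theorem IsPGroup.cls_eq_padicValNat_card_nsmul (hP : IsPGroup p P)
    (M : Type) [AddCommGroup M] [Module (ZMod p)[P] M] [Finite M] :
    G0.cls (.of (ZMod p)[P] M) = padicValNat p (Nat.card M) •
      G0.cls (.of (ZMod p)[P] ((ZMod p)[P] ⧸ augmentationIdeal (ZMod p) P)) := by
  induction h : Nat.card M using Nat.strong_induction_on generalizing M with
  | _ n ih =>
    subst h
    rcases subsingleton_or_nontrivial M with _ | _
    · rw [G0.cls_eq_zero_of_subsingleton, Nat.card_unique, padicValNat_one_right, zero_smul]
    obtain ⟨N, ⟨e⟩⟩ := hP.exists_submodule_equiv_quotient_augmentationIdeal M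
    have := Finite.of_surjective _ N.mkQ_surjective
    have hN : Nat.card N = p := by
      rw [← Nat.card_congr e.toEquiv, card_quotient_augmentationIdeal, Nat.card_zmod]
    have hM : Nat.card M = p * Nat.card (M ⧸ N) := by
      rw [N.card_eq_card_quotient_mul_card, hN]
    have hlt : Nat.card (M ⧸ N) < Nat.card M := by
      rw [hM]
      exact lt_mul_left Nat.card_pos (Fact.out : p.Prime).one_lt
    rw [G0.cls_eq_cls_add_cls_quotient M N, ← G0.cls_congr e, ih _ hlt _ rfl, hM,
      padicValNat.mul (Fact.out : p.Prime).ne_zero Nat.card_pos.ne', padicValNat_self,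
      add_nsmul, one_nsmul]

theorem IsPGroup.permClass_eq_aug_zsmul (hP : IsPGroup p P) (x : FreeAbelianGroup (BSet P)) :
    permClass p P x = aug P x • G0.cls (.of (ZMod p)[P]
      ((ZMod p)[P] ⧸ augmentationIdeal (ZMod p) P)) := by
  rw [← zmultiplesHom_apply, ← AddMonoidHom.comp_apply]
  congr 1
  refine FreeAbelianGroup.lift_ext _ _ fun X ↦ ?_
  rw [AddMonoidHom.comp_apply, permClass, aug, FreeAbelianGroup.lift_apply_of,
    FreeAbelianGroup.lift_apply_of, zmultiplesHom_apply, hP.cls_eq_padicValNat_card_nsmul,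
    padicValNat_card_ofMulAction_asModule, natCast_zsmul]

end PGroup

/-- for a prime `p` and a finite `p`-group `P`, the kernel of the map
`b(P) → G₀(𝔽_p[P])`, `[X] ↦ [𝔽_p[X]]`, is exactly the kernel of the augmentation map
`b(P) → ℤ`, `[X] ↦ |X|`: a virtual `P`-set maps to `0` if and only if its virtual
cardinality is `0`. -/
theorem stmt13 (p : ℕ) [Fact p.Prime] (P : Type) [Group P] [Finite P]
    (hP : IsPGroup p P) (x : FreeAbelianGroup (BSet P)) :
    permClass p P x = 0 ↔ aug P x = 0 := by
  constructor
  · intro h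
    rw [← padicValCard_permClass p, h, map_zero]
  · intro h
    rw [hP.permClass_eq_aug_zsmul, h, zero_smul]
end
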